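/- Let α : ℕ → ℝ satisfy 0 < α_n ≤ 1 for all n and suppose (ln α_n)_n is completely alternating (so the contractive weighted shift W_α is moment infinitely divisible). If for some integers n ≥ 1 and k ≥ 0 one has ∑_{i=0}^{n} (-1)^i C(n,i) ln α_{k+i} = 0, then W_α is flat: α_j = α_{j+1} for all j ≥ 1 (so α_0 ≤ α_1 = α_2 = α_3 = ⋯). -/
import Mathlib


/-- The `n`-th iterated forward difference of a sequence, evaluated at `k`. -/
noncomputable def fdiff (a : ℕ → ℝ) (n k : ℕ) : ℝ :=
  ∑ i ∈ Finset.range (n + 1), (-1 : ℝ) ^ i * (n.choose i : ℝ) * a (k + i)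

/-- A sequence is completely alternating if all iterated forward differences of
order `n ≥ 1` are nonpositive. -/
def CompletelyAlternating (a : ℕ → ℝ) : Prop :=
  ∀ n : ℕ, 1 ≤ n → ∀ k : ℕ, fdiff a n k ≤ 0

lemma fdiff_one (a : ℕ → ℝ) (k : ℕ) : fdiff a 1 k = a k - a (k+1) := by
  simp [fdiff, Finset.sum_range_succ]
  ring

lemma fdiff_succ (a : ℕ → ℝ) (n k : ℕ) :
    fdiff a (n+1) k = fdiff a n k - fdiff a n (k+1) := by
  unfold fdiff
  rw [Finset.sum_range_succ' (fun i => (-1:ℝ)^i * (((n+1).choose i : ℕ) : ℝ) * a (k+i)) (n+1)]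
  have h1 : ∀ i ∈ Finset.range (n+1),
      (-1:ℝ)^(i+1) * (((n+1).choose (i+1) : ℕ) : ℝ) * a (k+(i+1))
      = (-1:ℝ)^(i+1) * ((n.choose i : ℕ) : ℝ) * a (k+(i+1))
        + (-1:ℝ)^(i+1) * ((n.choose (i+1) : ℕ) : ℝ) * a (k+(i+1)) := by
    intro i _
    rw [Nat.choose_succ_succ]
    push_cast
    ring
  rw [Finset.sum_congr rfl h1, Finset.sum_add_distrib]
  have h2 : ∑ i ∈ Finset.range (n+1), (-1:ℝ)^(i+1) * ((n.choose i : ℕ) : ℝ) * a (k+(i+1))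
      = - ∑ i ∈ Finset.range (n+1), (-1:ℝ)^i * ((n.choose i : ℕ) : ℝ) * a ((k+1)+i) := by
    rw [← Finset.sum_neg_distrib]
    apply Finset.sum_congr rfl
    intro i _
    have : k + (i+1) = (k+1) + i := by omega
    rw [this]
    ring
  have h3 : ∑ i ∈ Finset.range (n+1), (-1:ℝ)^(i+1) * ((n.choose (i+1) : ℕ) : ℝ) * a (k+(i+1))
        + (-1:ℝ)^0 * (((n+1).choose 0 : ℕ) : ℝ) * a (k+0)
      = ∑ i ∈ Finset.range (n+1), (-1:ℝ)^i * ((n.choose i : ℕ) : ℝ) * a (k+i) := by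
    rw [Finset.sum_range_succ]
    have htop : (-1:ℝ)^(n+1) * ((n.choose (n+1) : ℕ) : ℝ) * a (k+(n+1)) = 0 := by
      simp [Nat.choose_succ_self]
    rw [htop, add_zero]
    rw [Finset.sum_range_succ' (fun i => (-1:ℝ)^i * ((n.choose i : ℕ) : ℝ) * a (k+i)) n]
    simp
  linarith [h2, h3]

open Filter Topology

lemma fdiff_incr (a : ℕ → ℝ) (m j : ℕ) :
    fdiff (fun i => a (i+1) - a i) m j = - fdiff a (m+1) j := by
  rw [fdiff_succ]
  unfold fdiff
  rw [← Finset.sum_sub_distrib]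
  have : ∀ i ∈ Finset.range (m+1),
      (-1:ℝ)^i * ((m.choose i : ℕ) : ℝ) * (a (j+i+1) - a (j+i))
      = (-1:ℝ)^i * ((m.choose i : ℕ) : ℝ) * a ((j+1)+i)
        - (-1:ℝ)^i * ((m.choose i : ℕ) : ℝ) * a (j+i) := by
    intro i _
    have : j + i + 1 = (j+1) + i := by omega
    rw [this]; ring
  rw [Finset.sum_congr rfl this]
  simp only [Finset.sum_sub_distrib]
  ring

lemma fdiff_tendsto (a : ℕ → ℝ) (L : ℝ) (hL : Tendsto a atTop (𝓝 L)) (m : ℕ) (hm : 1 ≤ m) :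
    Tendsto (fun j => fdiff a m j) atTop (𝓝 0) := by
  have h : Tendsto (fun j => fdiff a m j) atTop
      (𝓝 (∑ i ∈ Finset.range (m+1), (-1:ℝ)^i * ((m.choose i : ℕ) : ℝ) * L)) := by
    apply tendsto_finset_sum
    intro i _
    have : Tendsto (fun j => a (j + i)) atTop (𝓝 L) := hL.comp (tendsto_add_atTop_nat i)
    exact this.const_mul _
  have hsum : ∑ i ∈ Finset.range (m+1), (-1:ℝ)^i * ((m.choose i : ℕ) : ℝ) * L = 0 := by
    have hz := Int.alternating_sum_range_choose_of_ne (n := m) (by omega)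
    have : ∑ i ∈ Finset.range (m+1), (-1:ℝ)^i * ((m.choose i : ℕ) : ℝ)
        = ((∑ i ∈ Finset.range (m+1), (-1:ℤ)^i * (m.choose i : ℤ) : ℤ) : ℝ) := by
      push_cast; ring
    calc ∑ i ∈ Finset.range (m+1), (-1:ℝ)^i * ((m.choose i : ℕ) : ℝ) * L
        = (∑ i ∈ Finset.range (m+1), (-1:ℝ)^i * ((m.choose i : ℕ) : ℝ)) * L := by
          rw [Finset.sum_mul]
      _ = 0 := by rw [this, hz]; simp
  rwa [hsum] at h

lemma fdiff_two_term (b : ℕ → ℝ) (j m' : ℕ) (hv : ∀ i, j + 2 ≤ i → b i = 0) :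
    fdiff b (m'+1) j = b j - ((m'+1 : ℕ) : ℝ) * b (j+1) := by
  unfold fdiff
  rw [Finset.sum_range_succ' _ (m'+1), Finset.sum_range_succ' _ m']
  have : ∀ i ∈ Finset.range m',
      (-1:ℝ)^(i+1+1) * (((m'+1).choose (i+1+1) : ℕ) : ℝ) * b (j+(i+1+1)) = 0 := by
    intro i _
    rw [hv (j+(i+1+1)) (by omega), mul_zero]
  rw [Finset.sum_congr rfl this, Finset.sum_const_zero]
  simp [Nat.choose_one_right]
  ring

theorem stmt18 (α : ℕ → ℝ) (hα : ∀ n, 0 < α n) (hα1 : ∀ n, α n ≤ 1)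
    (hCA : CompletelyAlternating (fun n => Real.log (α n)))
    (n k : ℕ) (hn : 1 ≤ n)
    (hzero : fdiff (fun j => Real.log (α j)) n k = 0) :
    (∀ j : ℕ, 1 ≤ j → α j = α (j + 1)) ∧ α 0 ≤ α 1 := by
  set a : ℕ → ℝ := fun j => Real.log (α j) with ha
  have hCA' : ∀ m, 1 ≤ m → ∀ j, fdiff a m j ≤ 0 := hCA
  have hstep : ∀ j, a j ≤ a (j+1) := by
    intro j
    have h := hCA' 1 le_rfl j
    rw [fdiff_one] at h
    linarith
  have hmono : Monotone a := monotone_nat_of_le_succ hstep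
  have hbdd : ∀ j, a j ≤ 0 := fun j => Real.log_nonpos (hα j).le (hα1 j)
  have hL : Filter.Tendsto a Filter.atTop (nhds (⨆ j, a j)) := by
    apply tendsto_atTop_ciSup hmono
    exact ⟨0, by rintro x ⟨j, rfl⟩; exact hbdd j⟩
  -- Step A: propagate the zero rightward at order n
  have QA : ∀ j, fdiff a n (k + j) = 0 := by
    intro j
    induction j with
    | zero => simpa using hzero
    | succ j ih =>
      have h1 : fdiff a (n+1) (k+j) ≤ 0 := hCA' (n+1) (by omega) _
      have h2 : fdiff a n (k+j+1) ≤ 0 := hCA' n hn _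
      have h3 := fdiff_succ a n (k+j)
      show fdiff a n (k+j+1) = 0
      linarith
  have QAn : ∀ j, k ≤ j → fdiff a n j = 0 := by
    intro j hj
    have := QA (j - k)
    rwa [Nat.add_sub_cancel' hj] at this
  -- Step B: descend to order 1
  have down : ∀ m, 1 ≤ m → (∀ j, k ≤ j → fdiff a (m+1) j = 0) →
      ∀ j, k ≤ j → fdiff a m j = 0 := by
    intro m hm hQ j hj
    have hconst : ∀ i, fdiff a m (j + i) = fdiff a m j := by
      intro i
      induction i with
      | zero => rfl
      | succ i ih =>
        have h3 := fdiff_succ a m (j+i)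
        have hz := hQ (j+i) (le_trans hj (Nat.le_add_right _ _))
        show fdiff a m (j+i+1) = _
        linarith
    have ht0 := fdiff_tendsto a _ hL m hm
    have htc : Filter.Tendsto (fun i => fdiff a m i) Filter.atTop (nhds (fdiff a m j)) := by
      apply Filter.Tendsto.congr' _ tendsto_const_nhds
      filter_upwards [Filter.eventually_ge_atTop j] with i hi
      rw [← hconst (i - j), Nat.add_sub_cancel' hi]
    exact tendsto_nhds_unique htc ht0
  have QB : ∀ d, ∀ j, k ≤ j → fdiff a (max 1 (n - d)) j = 0 := by
    intro d
    induction d with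
    | zero =>
      have : max 1 (n - 0) = n := by omega
      rw [this]; exact QAn
    | succ d ih =>
      by_cases hc : n - d ≤ 1
      · have : max 1 (n - (d+1)) = max 1 (n - d) := by omega
        rw [this]; exact ih
      · have h1 : max 1 (n - (d+1)) = n - d - 1 := by omega
        have h2 : (n - d - 1) + 1 = max 1 (n - d) := by omega
        rw [h1]
        exact down (n - d - 1) (by omega) (by rw [h2]; exact ih)
  have Q1 : ∀ j, k ≤ j → fdiff a 1 j = 0 := by
    have := QB n
    have h : max 1 (n - n) = 1 := by omega
    rwa [h] at this
  -- Step C: increments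
  set b : ℕ → ℝ := fun i => a (i+1) - a i with hbdef
  have hb0 : ∀ i, 0 ≤ b i := fun i => by simp [hbdef]; exact hstep i
  have hfb : ∀ m j, 0 ≤ fdiff b m j := by
    intro m j
    rw [hbdef, fdiff_incr]
    have := hCA' (m+1) (by omega) j
    linarith
  have hbk : ∀ i, k ≤ i → b i = 0 := by
    intro i hi
    have := Q1 i hi
    rw [fdiff_one] at this
    simp [hbdef]
    linarith
  -- Step D: leftward, Archimedean argument
  have stepL : ∀ j, (∀ i, j + 2 ≤ i → b i = 0) → b (j+1) = 0 := by
    intro j hv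
    have key : ∀ m' : ℕ, ((m'+1 : ℕ) : ℝ) * b (j+1) ≤ b j := by
      intro m'
      have h1 := hfb (m'+1) j
      rw [fdiff_two_term b j m' hv] at h1
      linarith
    by_contra hne
    have hpos : 0 < b (j+1) := lt_of_le_of_ne (hb0 _) (Ne.symm hne)
    obtain ⟨M, hM⟩ := exists_nat_gt (b j / b (j+1))
    have h2 := key M
    have h3 : b j / b (j+1) < (M+1 : ℝ) := by push_cast at hM ⊢; linarith
    rw [div_lt_iff₀ hpos] at h3
    push_cast at h2
    linarith
  have S : ∀ d, ∀ i, 1 ≤ i → k - d ≤ i → b i = 0 := by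
    intro d
    induction d with
    | zero => intro i h1 h2; exact hbk i (by omega)
    | succ d ih =>
      intro i h1 h2
      by_cases hc : k - d ≤ i
      · exact ih i h1 hc
      · have hv : ∀ i', (i - 1) + 2 ≤ i' → b i' = 0 := by
          intro i' hi'
          exact ih i' (by omega) (by omega)
        have := stepL (i - 1) hv
        rwa [Nat.sub_add_cancel h1] at this
  have hflat : ∀ j : ℕ, 1 ≤ j → a j = a (j+1) := by
    intro j hj
    have := S k j hj (by omega)
    simp [hbdef] at this
    linarith
  constructor
  · intro j hj
    have h := hflat j hj
    have : Real.log (α j) = Real.log (α (j+1)) := h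
    calc α j = Real.exp (Real.log (α j)) := (Real.exp_log (hα j)).symm
      _ = Real.exp (Real.log (α (j+1))) := by rw [this]
      _ = α (j+1) := Real.exp_log (hα (j+1))
  · have h := hstep 0
    have : Real.log (α 0) ≤ Real.log (α 1) := h
    calc α 0 = Real.exp (Real.log (α 0)) := (Real.exp_log (hα 0)).symm
      _ ≤ Real.exp (Real.log (α 1)) := Real.exp_le_exp.mpr this
      _ = α 1 := Real.exp_log (hα 1)
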